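/- arXiv:1707.00477 — 6 statements merged into one kernel-verified Lean document; each statement's English description precedes it below -/
import Mathlib

section
/- Let n ≥ 4 be an even integer and let C be a locally optimal coloring of K_n. Then for every edge uv with C(uv) = i one has a_{u,i}(C) + a_{v,i}(C) ≤ 3. -/
open Finset

/-- A (not necessarily proper) coloring of the edges of `K_n` with the colors `{1, …, n-1}`
(modeled as `Fin (n-1)`).  The values on diagonal elements of `Sym2 (Fin n)` are irrelevant. -/
def EdgeColoring (n : ℕ) : Type := Sym2 (Fin n) → Fin (n - 1)

/-- `aCount C u μ` is the number of `μ`-colored edges of `C` incident with the vertex `u`. -/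
def aCount {n : ℕ} (C : EdgeColoring n) (u : Fin n) (μ : Fin (n - 1)) : ℕ :=
  (Finset.univ.filter (fun v : Fin n => v ≠ u ∧ C s(u, v) = μ)).card

/-- `Phi C = Σ_{u,μ} a_{u,μ}(C)²`. -/
def Phi {n : ℕ} (C : EdgeColoring n) : ℕ :=
  ∑ u : Fin n, ∑ μ : Fin (n - 1), (aCount C u μ) ^ 2

/-- `Psi C` is the number of unordered pairs of distinct incident edges of `K_n` receiving the
same color under `C` (counted as ordered pairs and divided by two). -/
def Psi {n : ℕ} (C : EdgeColoring n) : ℕ :=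
  ((Finset.univ : Finset (Sym2 (Fin n) × Sym2 (Fin n))).filter
    (fun p => ¬ p.1.IsDiag ∧ ¬ p.2.IsDiag ∧ p.1 ≠ p.2 ∧
      (∃ x : Fin n, x ∈ p.1 ∧ x ∈ p.2) ∧ C p.1 = C p.2)).card / 2

/-- `C'` differs from `C` on exactly one edge. -/
def DiffersOnOneEdge {n : ℕ} (C C' : EdgeColoring n) : Prop :=
  ∃ e : Sym2 (Fin n), ¬ e.IsDiag ∧ C' e ≠ C e ∧
    ∀ f : Sym2 (Fin n), ¬ f.IsDiag → f ≠ e → C' f = C f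

/-- A coloring is locally optimal if no single-edge recoloring decreases `Psi`. -/
def LocallyOptimal {n : ℕ} (C : EdgeColoring n) : Prop :=
  ∀ C' : EdgeColoring n, DiffersOnOneEdge C C' → Psi C ≤ Psi C'

/-- A one-factorization: a proper edge coloring of `K_n` with the `n-1` colors. -/
def IsOneFactorization {n : ℕ} (C : EdgeColoring n) : Prop :=
  ∀ e f : Sym2 (Fin n), ¬ e.IsDiag → ¬ f.IsDiag → e ≠ f →
    (∃ x : Fin n, x ∈ e ∧ x ∈ f) → C e ≠ C f

/-- The graph formed by the `μ`-colored edges of `C`. -/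
def monoGraph {n : ℕ} (C : EdgeColoring n) (μ : Fin (n - 1)) : SimpleGraph (Fin n) where
  Adj x y := x ≠ y ∧ C s(x, y) = μ
  symm := ⟨fun x y h => ⟨h.1.symm, by rw [Sym2.eq_swap]; exact h.2⟩⟩
  loopless := ⟨fun x h => h.1 rfl⟩

/-- An IV coloring: for every color `μ`, every connected component of the graph formed by the
`μ`-colored edges is either a single edge or a path with exactly two edges. -/
def IsIVColoring {n : ℕ} (C : EdgeColoring n) : Prop :=
  ∀ μ : Fin (n - 1), ∀ x : Fin n, (∃ y, (monoGraph C μ).Adj x y) →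
    (∃ u v : Fin n, (monoGraph C μ).Adj u v ∧
        {w | (monoGraph C μ).Reachable x w} = {u, v}) ∨
    (∃ u v w : Fin n, (monoGraph C μ).Adj u v ∧ (monoGraph C μ).Adj v w ∧
        u ≠ w ∧ ¬ (monoGraph C μ).Adj u w ∧
        {t | (monoGraph C μ).Reachable x t} = {u, v, w})

/-- `C'` is obtained from `C` by a `(u,v)`-flip. -/
def IsFlip {n : ℕ} (C C' : EdgeColoring n) (u v : Fin n) : Prop :=
  C' s(u, v) = C s(u, v) ∧
  (∀ e : Sym2 (Fin n), ¬ e.IsDiag → u ∉ e → v ∉ e → C' e = C e) ∧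
  ∀ w : Fin n, w ≠ u → w ≠ v →
    ((C' s(w, u) = C s(w, u) ∧ C' s(w, v) = C s(w, v)) ∨
     (C' s(w, u) = C s(w, v) ∧ C' s(w, v) = C s(w, u)))

/-- The edges of `K_n` with both endpoints in `S`. -/
def edgesIn {n : ℕ} (S : Finset (Fin n)) : Finset (Sym2 (Fin n)) :=
  Finset.univ.filter (fun e => ¬ e.IsDiag ∧ ∀ x : Fin n, x ∈ e → x ∈ S)

/-- `gammaColors C S`: the number of distinct colors on edges with both endpoints in `S`. -/
def gammaColors {n : ℕ} (C : EdgeColoring n) (S : Finset (Fin n)) : ℕ :=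
  ((edgesIn S).image C).card

/-- The deficit `D(S) = C(|S|, 2) - γ(S)`. -/
def deficit {n : ℕ} (C : EdgeColoring n) (S : Finset (Fin n)) : ℤ :=
  (Nat.choose S.card 2 : ℤ) - gammaColors C S

/-! Counting ordered pairs of same-colored incident edges at their common vertex gives
`Ψ(C) = ∑_{x,μ} (a_{x,μ} choose 2)`. Recoloring an edge `uv` from `i` to `j` therefore changes
`Ψ` by `(a_{u,j} + a_{v,j} + 2) - (a_{u,i} + a_{v,i})`, so local optimality yields
`a_{u,i} + a_{v,i} ≤ a_{u,j} + a_{v,j} + 2` for every color `j`. As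
`∑_μ (a_{u,μ} + a_{v,μ}) = 2(n-1)` is spread over `n - 1` colors, `a_{u,i} + a_{v,i} ≥ 4`
would force some `j ≠ i` with `a_{u,j} + a_{v,j} ≤ 1`. -/

section Counting
variable {n : ℕ} (C : EdgeColoring n)

def colorNeighbors (x : Fin n) (μ : Fin (n - 1)) : Finset (Fin n) :=
  univ.filter fun y => y ≠ x ∧ C s(x, y) = μ

lemma card_colorNeighbors (x : Fin n) (μ : Fin (n - 1)) :
    #(colorNeighbors C x μ) = aCount C x μ := rfl

lemma sum_aCount (x : Fin n) : ∑ μ, aCount C x μ = n - 1 := by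
  calc ∑ μ, aCount C x μ = ∑ μ, #{y ∈ univ.erase x | C s(x, y) = μ} :=
        sum_congr rfl fun μ _ => congrArg card <| by ext y; simp
    _ = #(univ.erase x) := (card_eq_sum_card_fiberwise fun _ _ => mem_univ _).symm
    _ = n - 1 := by simp

def sameColorPairs : Finset (Sym2 (Fin n) × Sym2 (Fin n)) :=
  univ.filter fun p => ¬ p.1.IsDiag ∧ ¬ p.2.IsDiag ∧ p.1 ≠ p.2 ∧
    (∃ x : Fin n, x ∈ p.1 ∧ x ∈ p.2) ∧ C p.1 = C p.2

def sameColorTriples : Finset ((_ : Fin n) × Fin n × Fin n) :=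
  univ.sigma fun x => univ.biUnion fun μ => (colorNeighbors C x μ).offDiag

variable {C} in
lemma mem_sameColorTriples {x y z : Fin n} :
    ⟨x, y, z⟩ ∈ sameColorTriples C ↔
      y ≠ x ∧ z ≠ x ∧ y ≠ z ∧ C s(x, y) = C s(x, z) := by
  simp only [sameColorTriples, colorNeighbors, mem_sigma, mem_biUnion, mem_offDiag, mem_filter,
    mem_univ, true_and]
  constructor
  · rintro ⟨μ, ⟨hy, rfl⟩, ⟨hz, hc⟩, hyz⟩
    exact ⟨hy, hz, hyz, hc.symm⟩
  · rintro ⟨hy, hz, hyz, hc⟩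
    exact ⟨_, ⟨hy, rfl⟩, ⟨hz, hc.symm⟩, hyz⟩

lemma card_sameColorTriples :
    #(sameColorTriples C) = 2 * ∑ x, ∑ μ, (aCount C x μ).choose 2 := by
  rw [sameColorTriples, card_sigma, mul_sum]
  refine sum_congr rfl fun x _ => ?_
  rw [card_biUnion, mul_sum]
  · refine sum_congr rfl fun μ _ => ?_
    rw [← card_colorNeighbors, ← Sym2.card_image_offDiag, Sym2.two_mul_card_image_offDiag]
  · intro μ _ ν _ hμν
    refine disjoint_left.mpr fun p hp hp' => hμν ?_
    simp only [colorNeighbors, mem_offDiag, mem_filter] at hp hp'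
    exact hp.1.2.2.symm.trans hp'.1.2.2

lemma card_sameColorPairs : #(sameColorPairs C) = #(sameColorTriples C) := by
  symm
  refine card_bij (fun t _ => (s(t.1, t.2.1), s(t.1, t.2.2))) ?_ ?_ ?_
  · rintro ⟨x, y, z⟩ ht
    obtain ⟨hy, hz, hyz, hc⟩ := mem_sameColorTriples.mp ht
    simp only [sameColorPairs, mem_filter, mem_univ, true_and, Sym2.mk_isDiag_iff, ne_eq,
      Sym2.congr_right]
    exact ⟨Ne.symm hy, Ne.symm hz, hyz, ⟨x, Sym2.mem_mk_left _ _, Sym2.mem_mk_left _ _⟩, hc⟩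
  · rintro ⟨x, y, z⟩ ht ⟨x', y', z'⟩ ht' h
    obtain ⟨hy, hz, hyz, -⟩ := mem_sameColorTriples.mp ht
    obtain ⟨hy', hz', hyz', -⟩ := mem_sameColorTriples.mp ht'
    obtain ⟨hxy, hxz⟩ : s(x, y) = s(x', y') ∧ s(x, z) = s(x', z') := Prod.mk.inj h
    obtain rfl : x = x' := by
      by_contra hxx
      have hy'x : x = y' := (Sym2.mem_iff.mp (hxy ▸ Sym2.mem_mk_left x y)).resolve_left hxx
      have hz'x : x = z' := (Sym2.mem_iff.mp (hxz ▸ Sym2.mem_mk_left x z)).resolve_left hxx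
      exact hyz' (hy'x.symm.trans hz'x)
    rw [Sym2.congr_right] at hxy hxz
    rw [hxy, hxz]
  · rintro ⟨e, f⟩ hp
    simp only [sameColorPairs, mem_filter, mem_univ, true_and] at hp
    obtain ⟨he, hf, hef, ⟨x, hxe, hxf⟩, hc⟩ := hp
    obtain ⟨y, rfl⟩ := Sym2.mem_iff_exists.mp hxe
    obtain ⟨z, rfl⟩ := Sym2.mem_iff_exists.mp hxf
    rw [Sym2.mk_isDiag_iff] at he hf
    refine ⟨⟨x, y, z⟩, mem_sameColorTriples.mpr ⟨Ne.symm he, Ne.symm hf, ?_, hc⟩, rfl⟩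
    rintro rfl
    exact hef rfl

lemma Psi_eq_sum_choose : Psi C = ∑ x, ∑ μ, (aCount C x μ).choose 2 := by
  change #(sameColorPairs C) / 2 = _
  rw [card_sameColorPairs, card_sameColorTriples, Nat.mul_div_cancel_left _ two_pos]

end Counting

/-- `g` is `f` with one unit moved from coordinate `i` to coordinate `j`. -/
lemma sum_choose_two_add_of_move {ι : Type*} [Fintype ι] [DecidableEq ι] {f g : ι → ℕ}
    {i j : ι} (hij : i ≠ j)
    (h : ∀ k, g k + (if i = k then 1 else 0) = f k + if j = k then 1 else 0) :
    ∑ k, (g k).choose 2 + f i = ∑ k, (f k).choose 2 + f j + 1 := by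
  have hi : g i + 1 = f i := by simpa [hij, Ne.symm hij] using h i
  have hj : g j = f j + 1 := by simpa [hij, Ne.symm hij] using h j
  have hk : ∀ k ∈ ({i, j} : Finset ι)ᶜ, (g k).choose 2 = (f k).choose 2 := fun k hk => by
    simp only [mem_compl, mem_insert, mem_singleton, not_or] at hk
    simpa [Ne.symm hk.1, Ne.symm hk.2] using congrArg (·.choose 2) (h k)
  have hsucc (m : ℕ) : (m + 1).choose 2 = m.choose 2 + m := by
    rw [Nat.choose_succ_succ', Nat.choose_one_right, add_comm]
  rw [← sum_add_sum_compl {i, j} fun k => (g k).choose 2, ← sum_add_sum_compl {i, j},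
    sum_pair hij, sum_pair hij, sum_congr rfl hk, ← hi, hj, hsucc, hsucc]
  omega

section Recoloring
variable {n : ℕ} (C : EdgeColoring n)

def recolor (e : Sym2 (Fin n)) (j : Fin (n - 1)) : EdgeColoring n :=
  Function.update C e j

lemma recolor_self (e : Sym2 (Fin n)) (j : Fin (n - 1)) : recolor C e j e = j :=
  Function.update_self ..

lemma recolor_of_ne {e f : Sym2 (Fin n)} (h : f ≠ e) (j : Fin (n - 1)) : recolor C e j f = C f :=
  Function.update_of_ne h ..

lemma aCount_eq_card_add_ite {u v : Fin n} (huv : u ≠ v) (μ : Fin (n - 1)) :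
    aCount C u μ =
      #{t ∈ univ.erase v | t ≠ u ∧ C s(u, t) = μ} + if C s(u, v) = μ then 1 else 0 := by
  rw [aCount, card_filter, card_filter, ← add_sum_erase _ _ (mem_univ v), add_comm]
  simp [Ne.symm huv]

lemma aCount_recolor_of_notMem {x : Fin n} {e : Sym2 (Fin n)} (hx : x ∉ e) (j μ : Fin (n - 1)) :
    aCount (recolor C e j) x μ = aCount C x μ := by
  refine congrArg card (filter_congr fun t _ => ?_)
  have hxt : s(x, t) ≠ e := fun h => hx (h ▸ Sym2.mem_mk_left x t)
  rw [recolor_of_ne C hxt]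

lemma aCount_recolor_add {u v : Fin n} (huv : u ≠ v) (j μ : Fin (n - 1)) :
    aCount (recolor C s(u, v) j) u μ + (if C s(u, v) = μ then 1 else 0)
      = aCount C u μ + if j = μ then 1 else 0 := by
  rw [aCount_eq_card_add_ite C huv, aCount_eq_card_add_ite (recolor C s(u, v) j) huv, recolor_self]
  have hrest : #{t ∈ univ.erase v | t ≠ u ∧ recolor C s(u, v) j s(u, t) = μ}
      = #{t ∈ univ.erase v | t ≠ u ∧ C s(u, t) = μ} :=
    congrArg card <| filter_congr fun t ht => by
      rw [recolor_of_ne C (by rw [ne_eq, Sym2.congr_right]; exact ne_of_mem_erase ht)]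
  rw [hrest, add_right_comm]

lemma Psi_recolor_add {u v : Fin n} (huv : u ≠ v) {j : Fin (n - 1)} (hj : C s(u, v) ≠ j) :
    Psi (recolor C s(u, v) j) + (aCount C u (C s(u, v)) + aCount C v (C s(u, v)))
      = Psi C + (aCount C u j + aCount C v j) + 2 := by
  have hu := sum_choose_two_add_of_move hj (aCount_recolor_add C huv j)
  have hv := sum_choose_two_add_of_move (Sym2.eq_swap ▸ hj) (aCount_recolor_add C huv.symm j)
  rw [Sym2.eq_swap] at hv
  have hrest : ∀ x ∈ ({u, v} : Finset (Fin n))ᶜ,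
      ∑ μ, (aCount (recolor C s(u, v) j) x μ).choose 2 = ∑ μ, (aCount C x μ).choose 2 :=
    fun x hx => by
    simp only [mem_compl, mem_insert, mem_singleton, not_or] at hx
    simp only [aCount_recolor_of_notMem C (Sym2.mem_iff.not.mpr (not_or.mpr hx))]
  rw [Psi_eq_sum_choose, Psi_eq_sum_choose, ← sum_add_sum_compl {u, v},
    ← sum_add_sum_compl {u, v} (fun x => ∑ μ, (aCount C x μ).choose 2), sum_pair huv,
    sum_pair huv, sum_congr rfl hrest]
  omega

end Recoloring

lemma LocallyOptimal.aCount_add_le {n : ℕ} {C : EdgeColoring n} (hC : LocallyOptimal C)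
    {u v : Fin n} (huv : u ≠ v) (j : Fin (n - 1)) :
    aCount C u (C s(u, v)) + aCount C v (C s(u, v)) ≤ aCount C u j + aCount C v j + 2 := by
  by_cases hj : C s(u, v) = j
  · subst hj
    exact Nat.le_add_right _ _
  have hdiff : DiffersOnOneEdge C (recolor C s(u, v) j) :=
    ⟨s(u, v), Sym2.mk_isDiag_iff.not.mpr huv, by rw [recolor_self]; exact Ne.symm hj,
      fun f _ hf => recolor_of_ne C hf j⟩
  have hopt := hC _ hdiff
  have hchange := Psi_recolor_add C huv hj
  omega

lemma exists_ne_aCount_add_le_one {n : ℕ} (C : EdgeColoring n) (u v : Fin n) (i : Fin (n - 1))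
    (hi : 4 ≤ aCount C u i + aCount C v i) : ∃ j ≠ i, aCount C u j + aCount C v j ≤ 1 := by
  by_contra! hall
  have hsum := sum_erase_add univ (fun μ => aCount C u μ + aCount C v μ) (mem_univ i)
  have hrest := card_nsmul_le_sum (univ.erase i) (fun μ => aCount C u μ + aCount C v μ) 2
    fun μ hμ => hall μ (ne_of_mem_erase hμ)
  simp only [sum_add_distrib, sum_aCount] at hsum hrest
  rw [card_erase_of_mem (mem_univ i), card_univ, Fintype.card_fin, smul_eq_mul] at hrest
  have := i.isLt
  omega

theorem locally_optimal_sum_le_three_general (n : ℕ)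
    (C : EdgeColoring n) (hC : LocallyOptimal C)
    (u v : Fin n) (huv : u ≠ v) (i : Fin (n - 1)) (hi : C s(u, v) = i) :
    aCount C u i + aCount C v i ≤ 3 := by
  by_contra! hlarge
  obtain ⟨j, -, hj⟩ := exists_ne_aCount_add_le_one C u v i hlarge
  have := hi ▸ hC.aCount_add_le huv j
  omega

/-- In a locally optimal coloring, every edge `uv` of color `i` satisfies
`a_{u,i} + a_{v,i} ≤ 3`. -/
theorem locally_optimal_sum_le_three (n : ℕ) (hn : Even n) (h4 : 4 ≤ n)
    (C : EdgeColoring n) (hC : LocallyOptimal C)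
    (u v : Fin n) (huv : u ≠ v) (i : Fin (n - 1)) (hi : C s(u, v) = i) :
    aCount C u i + aCount C v i ≤ 3 :=
  locally_optimal_sum_le_three_general n C hC u v huv i hi
end

section
/- Let n ≥ 2 be an even integer, let C be an IV coloring of K_n, and let α be a color such that the α-colored edges form exactly one Vee (together with a possibly empty collection of disjoint single edges). Then there exists a vertex x incident with no α-colored edge, and every such vertex x is the center of a Vee of some color γ ≠ α. -/
open Finset

/-! Every vertex meets at most two `α`-colored edges, since a vertex together with its
`α`-neighbours lies in one component of at most three vertices. If every vertex met an `α`-edge,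
the `α`-degrees would be `2` at the centre of the Vee and `1` elsewhere, summing to the odd number
`n + 1`, against the handshake lemma. A vertex `x` meeting no `α`-edge sees its `n - 1` edges
colored with the `n - 2` other colors, so two of them share a color. -/

section

variable {n : ℕ} {C : EdgeColoring n}

lemma ne_of_aCount_eq_zero {x : Fin n} {α : Fin (n - 1)} (hx : aCount C x α = 0) {v : Fin n}
    (hv : v ≠ x) : C s(x, v) ≠ α := by
  rw [aCount, card_eq_zero, filter_eq_empty_iff] at hx
  exact fun h => hx (mem_univ v) ⟨hv, h⟩

open Classical in
lemma aCount_eq_degree (u : Fin n) (μ : Fin (n - 1)) :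
    aCount C u μ = (monoGraph C μ).degree u := by
  rw [← SimpleGraph.card_neighborFinset_eq_degree, SimpleGraph.neighborFinset_eq_filter, aCount]
  congr 1
  ext v
  simp [monoGraph, eq_comm]

lemma even_sum_aCount (μ : Fin (n - 1)) : Even (∑ u, aCount C u μ) := by
  classical
  simp_rw [aCount_eq_degree, SimpleGraph.sum_degrees_eq_twice_card_edges]
  exact even_two_mul _

lemma IsIVColoring.exists_card_le_three_reachable_subset (hC : IsIVColoring C)
    (μ : Fin (n - 1)) {x y : Fin n} (hxy : (monoGraph C μ).Adj x y) :
    ∃ T : Finset (Fin n), #T ≤ 3 ∧ ∀ w, (monoGraph C μ).Reachable x w → w ∈ T := by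
  rcases hC μ x ⟨y, hxy⟩ with ⟨u, v, -, hcomp⟩ | ⟨u, v, w, -, -, -, -, hcomp⟩
  · refine ⟨{u, v}, card_le_two.trans (by norm_num), fun t ht => ?_⟩
    have : t ∈ ({u, v} : Set (Fin n)) := hcomp ▸ ht
    simpa using this
  · refine ⟨{u, v, w}, card_le_three, fun t ht => ?_⟩
    have : t ∈ ({u, v, w} : Set (Fin n)) := hcomp ▸ ht
    simpa using this

lemma IsIVColoring.aCount_le_two (hC : IsIVColoring C) (u : Fin n) (μ : Fin (n - 1)) :
    aCount C u μ ≤ 2 := by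
  set S := univ.filter (fun v : Fin n => v ≠ u ∧ C s(u, v) = μ)
  obtain hS | ⟨v, hv⟩ := S.eq_empty_or_nonempty
  · simp [aCount, S, hS]
  have hadj : ∀ {w}, w ∈ S → (monoGraph C μ).Adj u w := fun hw =>
    ⟨(mem_filter.mp hw).2.1.symm, (mem_filter.mp hw).2.2⟩
  obtain ⟨T, hT, hreach⟩ := hC.exists_card_le_three_reachable_subset μ (hadj hv)
  have hsub : insert u S ⊆ T := by
    intro w hw
    rcases mem_insert.mp hw with rfl | hw
    · exact hreach w SimpleGraph.Reachable.rfl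
    · exact hreach w (hadj hw).reachable
  have hu : u ∉ S := fun h => (mem_filter.mp h).2.1 rfl
  have := (card_le_card hsub).trans hT
  rw [card_insert_of_notMem hu] at this
  show #S ≤ 2
  omega

lemma IsIVColoring.exists_aCount_eq_zero (hC : IsIVColoring C) (hn : Even n)
    {α : Fin (n - 1)} (hone : #(univ.filter (fun u : Fin n => 2 ≤ aCount C u α)) = 1) :
    ∃ x : Fin n, aCount C x α = 0 := by
  by_contra! hpos
  obtain ⟨c, hc⟩ := card_eq_one.mp hone
  have hcenter : ∀ u, 2 ≤ aCount C u α ↔ u = c := fun u => by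
    simpa using congrArg (u ∈ ·) hc
  have hdeg : ∀ u, aCount C u α = if u = c then 2 else 1 := fun u => by
    have := hC.aCount_le_two u α
    have := hcenter u
    have := hpos u
    split_ifs <;> omega
  have hsum : ∑ u, aCount C u α = 2 + (n - 1) := by
    simp [hdeg, sum_ite, filter_eq', filter_ne', card_erase_of_mem]
  have hsum_odd : ¬ Even (∑ u, aCount C u α) := by
    rw [hsum, show 2 + (n - 1) = n + 1 by have := c.pos; omega]
    exact Nat.not_even_iff_odd.mpr hn.add_one
  exact hsum_odd (even_sum_aCount α)

lemma exists_vee_at_of_aCount_eq_zero {x : Fin n} {α : Fin (n - 1)} (hx : aCount C x α = 0) :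
    ∃ γ : Fin (n - 1), γ ≠ α ∧ ∃ y z : Fin n, y ≠ z ∧ y ≠ x ∧ z ≠ x ∧
      C s(x, y) = γ ∧ C s(x, z) = γ := by
  have hcard : #(univ.erase α) < #(univ.erase x) := by
    simp only [card_erase_of_mem (mem_univ _), card_univ, Fintype.card_fin]
    have := α.pos
    omega
  have hmaps : ∀ v ∈ univ.erase x, C s(x, v) ∈ univ.erase α := fun v hv =>
    mem_erase.mpr ⟨ne_of_aCount_eq_zero hx (ne_of_mem_erase hv), mem_univ _⟩
  obtain ⟨y, hy, z, hz, hyz, hcol⟩ := exists_ne_map_eq_of_card_lt_of_maps_to hcard hmaps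
  exact ⟨C s(x, y), ne_of_aCount_eq_zero hx (ne_of_mem_erase hy), y, z, hyz,
    ne_of_mem_erase hy, ne_of_mem_erase hz, rfl, hcol.symm⟩

end

theorem missing_color_vertex_is_center_general (n : ℕ) (hn : Even n)
    (C : EdgeColoring n) (hC : IsIVColoring C) (α : Fin (n - 1))
    (hone : (Finset.univ.filter (fun u : Fin n => 2 ≤ aCount C u α)).card = 1) :
    (∃ x : Fin n, aCount C x α = 0) ∧
    ∀ x : Fin n, aCount C x α = 0 →
      ∃ γ : Fin (n - 1), γ ≠ α ∧ ∃ y z : Fin n, y ≠ z ∧ y ≠ x ∧ z ≠ x ∧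
        C s(x, y) = γ ∧ C s(x, z) = γ :=
  ⟨hC.exists_aCount_eq_zero hn hone, fun _ hx => exists_vee_at_of_aCount_eq_zero hx⟩

/-- If `C` is an IV coloring and the `α`-colored edges form exactly one Vee
(together with a possibly empty collection of disjoint single edges) — i.e. exactly one vertex is
the center of an `α`-Vee — then some vertex is incident with no `α`-colored edge, and every such
vertex is the center of a Vee of some color `γ ≠ α`. -/
theorem missing_color_vertex_is_center (n : ℕ) (hn : Even n) (h2 : 2 ≤ n)
    (C : EdgeColoring n) (hC : IsIVColoring C) (α : Fin (n - 1))
    (hone : (Finset.univ.filter (fun u : Fin n => 2 ≤ aCount C u α)).card = 1) :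
    (∃ x : Fin n, aCount C x α = 0) ∧
    ∀ x : Fin n, aCount C x α = 0 →
      ∃ γ : Fin (n - 1), γ ≠ α ∧ ∃ y z : Fin n, y ≠ z ∧ y ≠ x ∧ z ≠ x ∧
        C s(x, y) = γ ∧ C s(x, z) = γ :=
  missing_color_vertex_is_center_general n hn C hC α hone
end

section
/- Let n ≥ 2 be an even integer, let C be a coloring of K_n, and let u, v be distinct vertices such that |a_{u,λ}(C) − a_{v,λ}(C)| ≥ 2 for some color λ. Then there exists a coloring C' obtained from C by a (u,v)-flip such that Φ(C') < Φ(C). -/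
open Finset

/-!
Write `d μ = a_{u,μ} - a_{v,μ}` and assume `d λ ≥ 2` (the other sign is the same with `u, v`
exchanged). Flipping a set `S` of vertices outside `{u, v}` subtracts
`t = Σ_{w ∈ S} (e_{C(wu)} - e_{C(wv)})` from the color vector of `u`, adds it to that of `v`, and
permutes the edges at every other vertex, so `Φ` changes by `Σ_μ 2 t μ (t μ - d μ)`.

Draw an arc `α → β` between colors whenever some `w ∉ {u, v}` has `C(wu) = α` and `C(wv) = β`.
The colors reachable from `λ` form a set `R` closed under arcs; counting the edges at `u` and at
`v` with colors in `R` gives `Σ_{μ ∈ R} d μ ≤ 0`, so some reachable `ν` has `d ν ≤ -1`. The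
witnesses of a simple path from `λ` to `ν` are distinct and give `t = e_λ - e_ν`, hence a change
of `2 (1 - d λ) + 2 (1 + d ν) < 0`.
-/

theorem Relation.ReflTransGen.exists_nodup_isChain {α : Type*} {r : α → α → Prop} {a b : α}
    (h : Relation.ReflTransGen r a b) :
    ∃ l : List α, (a :: l).IsChain r ∧ (a :: l).Nodup ∧ (a :: l).getLast? = some b := by
  induction h using Relation.ReflTransGen.head_induction_on with
  | refl => exact ⟨[], List.isChain_singleton _, List.nodup_singleton _, rfl⟩
  | @head a c hac _ ih =>
    obtain ⟨l, hchain, hnodup, hlast⟩ := ih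
    by_cases ha : a ∈ c :: l
    · obtain ⟨s, t, hst⟩ := List.append_of_mem ha
      rw [hst] at hchain hnodup hlast
      refine ⟨t, hchain.suffix (List.suffix_append _ _),
        hnodup.sublist (List.sublist_append_right _ _), ?_⟩
      rwa [List.getLast?_append_cons] at hlast
    · exact ⟨c :: l, List.isChain_cons_cons.mpr ⟨hac, hchain⟩, List.nodup_cons.mpr ⟨ha, hnodup⟩,
        by rwa [List.getLast?_cons_cons]⟩

lemma sum_two_mul_single_sub_single {ι : Type*} [Fintype ι] [DecidableEq ι] {a b : ι}
    (hab : a ≠ b) (d : ι → ℤ) :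
    ∑ i, 2 * (Pi.single a 1 - Pi.single b 1 : ι → ℤ) i *
      ((Pi.single a 1 - Pi.single b 1 : ι → ℤ) i - d i) = 2 * (1 - d a) + 2 * (1 + d b) := by
  rw [Fintype.sum_eq_add a b hab fun i hi => by simp [hi.1, hi.2]]
  simp only [Pi.sub_apply, Pi.single_eq_same, Pi.single_eq_of_ne hab, Pi.single_eq_of_ne hab.symm]
  ring

section ColorDegrees

variable {n : ℕ}

lemma aCount_congr {D D' : EdgeColoring n} {x : Fin n} (h : ∀ y, D s(x, y) = D' s(x, y))
    (μ : Fin (n - 1)) : aCount D x μ = aCount D' x μ := by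
  simp only [aCount, h]

lemma aCount_comp_map (C : EdgeColoring n) (σ : Equiv.Perm (Fin n)) (x : Fin n)
    (μ : Fin (n - 1)) : aCount (C ∘ Sym2.map σ : EdgeColoring n) x μ = aCount C (σ x) μ :=
  card_equiv σ fun y => by
    simp only [mem_filter, mem_univ, true_and, σ.injective.ne_iff]; rfl

lemma sum_aCount_eq_card (D : EdgeColoring n) (x : Fin n) (R : Finset (Fin (n - 1))) :
    ∑ ρ ∈ R, aCount D x ρ = #{y | y ≠ x ∧ D s(x, y) ∈ R} := by
  rw [card_eq_sum_card_fiberwise (f := fun y => D s(x, y)) fun y hy => (mem_filter.mp hy).2.2]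
  refine sum_congr rfl fun ρ hρ => congrArg card (ext fun y => ?_)
  simp only [mem_filter, mem_univ, true_and]
  constructor
  · rintro ⟨hy, rfl⟩; exact ⟨⟨hy, hρ⟩, rfl⟩
  · rintro ⟨⟨hy, _⟩, rfl⟩; exact ⟨hy, rfl⟩

def aCountVec (D : EdgeColoring n) (x : Fin n) : Fin (n - 1) → ℤ := fun μ => aCount D x μ

lemma aCountVec_eq_sum_single (D : EdgeColoring n) (x : Fin n) :
    aCountVec D x = ∑ y ∈ univ.erase x, Pi.single (D s(x, y)) 1 := by
  ext μ
  rw [Finset.sum_apply, aCountVec, aCount, card_filter, Nat.cast_sum,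
    ← sum_erase (a := x) _ (by simp)]
  refine sum_congr rfl fun y hy => ?_
  simp [Pi.single_apply, (ne_of_mem_erase hy).symm, eq_comm]

lemma aCountVec_eq_add_sum_of_eqOn {D D' : EdgeColoring n} {x : Fin n} {S : Finset (Fin n)}
    (hx : x ∉ S) (h : ∀ y ∉ S, D' s(x, y) = D s(x, y)) :
    aCountVec D' x = aCountVec D x +
      ∑ y ∈ S, (Pi.single (D' s(x, y)) 1 - Pi.single (D s(x, y)) 1) := by
  have hS : S ⊆ univ.erase x := fun y hy => mem_erase.mpr ⟨ne_of_mem_of_not_mem hy hx, mem_univ y⟩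
  have hsupp : ∑ y ∈ univ.erase x,
      (Pi.single (D' s(x, y)) 1 - Pi.single (D s(x, y)) 1 : Fin (n - 1) → ℤ) =
      ∑ y ∈ S, (Pi.single (D' s(x, y)) 1 - Pi.single (D s(x, y)) 1) := by
    refine (sum_subset hS fun y _ hy => ?_).symm
    rw [h y hy, sub_self]
  rw [aCountVec_eq_sum_single, aCountVec_eq_sum_single, ← hsupp, sum_sub_distrib, add_sub_cancel]

lemma Phi_eq_sum_aCountVec (D : EdgeColoring n) :
    (Phi D : ℤ) = ∑ x, ∑ μ, aCountVec D x μ ^ 2 := by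
  simp [Phi, aCountVec]

end ColorDegrees

lemma IsFlip.symm {n : ℕ} {C C' : EdgeColoring n} {u v : Fin n} (h : IsFlip C C' u v) :
    IsFlip C C' v u := by
  obtain ⟨huv, hfar, hnear⟩ := h
  refine ⟨by rwa [Sym2.eq_swap], fun e he hv hu => hfar e he hu hv, fun w hwv hwu => ?_⟩
  rcases hnear w hwu hwv with ⟨hu, hv⟩ | ⟨hu, hv⟩
  · exact Or.inl ⟨hv, hu⟩
  · exact Or.inr ⟨hv, hu⟩

section FlipOn

variable {n : ℕ} (C : EdgeColoring n) (u v : Fin n) (S : Finset (Fin n))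

/-- An edge meeting `S` takes the color of its image under the transposition `(u v)`; when
`u, v ∉ S` this swaps `C(wu)` and `C(wv)` exactly for `w ∈ S`. -/
def flipOn : EdgeColoring n := fun e =>
  if ∃ w ∈ S, w ∈ e then C (e.map (Equiv.swap u v)) else C e

def flipShift : Fin (n - 1) → ℤ :=
  ∑ w ∈ S, (Pi.single (C s(w, u)) 1 - Pi.single (C s(w, v)) 1)

variable {C u v S}

lemma flipOn_of_mem {w : Fin n} (hw : w ∈ S) (y : Fin n) :
    flipOn C u v S s(w, y) = C s(Equiv.swap u v w, Equiv.swap u v y) :=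
  if_pos ⟨w, hw, Sym2.mem_mk_left w y⟩

lemma flipOn_of_notMem {x y : Fin n} (hx : x ∉ S) (hy : y ∉ S) :
    flipOn C u v S s(x, y) = C s(x, y) :=
  if_neg (by rintro ⟨w, hw, hwe⟩; rcases Sym2.mem_iff.mp hwe with rfl | rfl <;> contradiction)

lemma flipOn_of_notMem_edge {e : Sym2 (Fin n)} (hu : u ∉ e) (hv : v ∉ e) :
    flipOn C u v S e = C e := by
  have : e.map (Equiv.swap u v) = e := by
    refine (Sym2.map_congr (g := id) fun x hx => ?_).trans (congrFun Sym2.map_id e)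
    exact Equiv.swap_apply_of_ne_of_ne (ne_of_mem_of_not_mem hx hu) (ne_of_mem_of_not_mem hx hv)
  unfold flipOn
  split_ifs <;> simp only [this]

lemma isFlip_flipOn (hu : u ∉ S) (hv : v ∉ S) : IsFlip C (flipOn C u v S) u v := by
  refine ⟨flipOn_of_notMem hu hv, fun e _ => flipOn_of_notMem_edge, fun w _ _ => ?_⟩
  by_cases hw : w ∈ S
  · right
    have hwuv : Equiv.swap u v w = w := Equiv.swap_apply_of_ne_of_ne ‹_› ‹_›
    simp only [flipOn_of_mem hw, hwuv, Equiv.swap_apply_left, Equiv.swap_apply_right, and_self]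
  · exact Or.inl ⟨flipOn_of_notMem hw hu, flipOn_of_notMem hw hv⟩

lemma aCount_flipOn_of_ne (hu : u ∉ S) (hv : v ∉ S) {x : Fin n} (hxu : x ≠ u) (hxv : x ≠ v)
    (μ : Fin (n - 1)) : aCount (flipOn C u v S) x μ = aCount C x μ := by
  have hσx : Equiv.swap u v x = x := Equiv.swap_apply_of_ne_of_ne hxu hxv
  by_cases hx : x ∈ S
  · rw [aCount_congr (D' := C ∘ Sym2.map (Equiv.swap u v)) (fun y => flipOn_of_mem hx y),
      aCount_comp_map, hσx]
  · refine aCount_congr (fun y => ?_) μ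
    by_cases hy : y ∈ S
    · rw [Sym2.eq_swap, flipOn_of_mem hy, hσx, Equiv.swap_apply_of_ne_of_ne
        (ne_of_mem_of_not_mem hy hu) (ne_of_mem_of_not_mem hy hv)]
    · exact flipOn_of_notMem hx hy

lemma aCountVec_flipOn_left (hu : u ∉ S) (hv : v ∉ S) :
    aCountVec (flipOn C u v S) u = aCountVec C u - flipShift C u v S := by
  rw [aCountVec_eq_add_sum_of_eqOn hu fun y hy => flipOn_of_notMem hu hy, sub_eq_add_neg,
    flipShift, ← sum_neg_distrib]
  refine congrArg _ (sum_congr rfl fun w hw => ?_)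
  rw [Sym2.eq_swap, flipOn_of_mem hw, Equiv.swap_apply_left, Equiv.swap_apply_of_ne_of_ne
    (ne_of_mem_of_not_mem hw hu) (ne_of_mem_of_not_mem hw hv), neg_sub]

lemma aCountVec_flipOn_right (hu : u ∉ S) (hv : v ∉ S) :
    aCountVec (flipOn C u v S) v = aCountVec C v + flipShift C u v S := by
  rw [aCountVec_eq_add_sum_of_eqOn hv fun y hy => flipOn_of_notMem hv hy, flipShift]
  refine congrArg _ (sum_congr rfl fun w hw => ?_)
  rw [Sym2.eq_swap, flipOn_of_mem hw, Equiv.swap_apply_right, Equiv.swap_apply_of_ne_of_ne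
    (ne_of_mem_of_not_mem hw hu) (ne_of_mem_of_not_mem hw hv)]

lemma Phi_flipOn (huv : u ≠ v) (hu : u ∉ S) (hv : v ∉ S) :
    (Phi (flipOn C u v S) : ℤ) = Phi C + ∑ μ, 2 * flipShift C u v S μ *
      (flipShift C u v S μ - (aCountVec C u μ - aCountVec C v μ)) := by
  rw [← sub_eq_iff_eq_add', Phi_eq_sum_aCountVec, Phi_eq_sum_aCountVec, ← sum_sub_distrib]
  simp_rw [← sum_sub_distrib]
  rw [Fintype.sum_eq_add u v huv, aCountVec_flipOn_left hu hv, aCountVec_flipOn_right hu hv,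
    ← sum_add_distrib]
  · exact sum_congr rfl fun μ _ => by simp only [Pi.sub_apply, Pi.add_apply]; ring
  · intro x hx
    simp [aCountVec, aCount_flipOn_of_ne hu hv hx.1 hx.2]

end FlipOn

section ColorArc

variable {n : ℕ} (C : EdgeColoring n) (u v : Fin n)

def colorArc (α β : Fin (n - 1)) : Prop :=
  ∃ w, w ≠ u ∧ w ≠ v ∧ C s(w, u) = α ∧ C s(w, v) = β

variable {C u v}

lemma sum_aCount_le_of_forall_colorArc_mem (huv : u ≠ v) {R : Finset (Fin (n - 1))}
    (hR : ∀ α ∈ R, ∀ β, colorArc C u v α β → β ∈ R) :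
    ∑ ρ ∈ R, aCount C u ρ ≤ ∑ ρ ∈ R, aCount C v ρ := by
  rw [sum_aCount_eq_card, sum_aCount_eq_card]
  -- `(u v)` sends `uv` to `vu`, and `uy` to `vy` for `y ∉ {u, v}`, whose color is in `R` as `R`
  -- is closed under the arc `C(yu) → C(yv)`.
  refine card_le_card_of_injOn (Equiv.swap u v) (fun y hy => ?_) (Equiv.swap u v).injective.injOn
  simp only [coe_filter, mem_univ, true_and, Set.mem_ofPred_eq] at hy ⊢
  obtain ⟨hyu, hyR⟩ := hy
  by_cases hyv : y = v
  · subst hyv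
    rw [Equiv.swap_apply_right, Sym2.eq_swap]
    exact ⟨huv, hyR⟩
  · rw [Equiv.swap_apply_of_ne_of_ne hyu hyv]
    exact ⟨hyv, hR _ hyR _ ⟨y, hyu, hyv, congrArg C Sym2.eq_swap, congrArg C Sym2.eq_swap⟩⟩

lemma exists_colorArc_reachable_aCount_lt (huv : u ≠ v) {lam : Fin (n - 1)}
    (hlam : aCount C v lam < aCount C u lam) :
    ∃ ν, Relation.ReflTransGen (colorArc C u v) lam ν ∧ aCount C u ν < aCount C v ν := by
  classical
  by_contra! h
  have hclosed := sum_aCount_le_of_forall_colorArc_mem huv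
    (R := {ν | Relation.ReflTransGen (colorArc C u v) lam ν})
    (by simpa using fun α hα β hαβ => hα.tail hαβ)
  exact hclosed.not_gt (sum_lt_sum (fun ν hν => h ν (by simpa using hν))
    ⟨lam, by simp [Relation.ReflTransGen.refl], hlam⟩)

lemma exists_flipShift_eq_of_isChain :
    ∀ (l : List (Fin (n - 1))) (a b : Fin (n - 1)), (a :: l).IsChain (colorArc C u v) →
      (a :: l).Nodup → (a :: l).getLast? = some b →
      ∃ S : Finset (Fin n), u ∉ S ∧ v ∉ S ∧ (∀ w ∈ S, C s(w, u) ∈ a :: l) ∧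
        flipShift C u v S = Pi.single a 1 - Pi.single b 1
  | [], a, b, _, _, hb => ⟨∅, notMem_empty u, notMem_empty v, by simp, by
      obtain rfl : a = b := by simpa using hb
      simp [flipShift]⟩
  | c :: l, a, b, hchain, hnodup, hb => by
    obtain ⟨⟨w, hwu, hwv, hwa, hwc⟩, hchain⟩ := List.isChain_cons_cons.mp hchain
    obtain ⟨ha, hnodup⟩ := List.nodup_cons.mp hnodup
    obtain ⟨S, hu, hv, hS, hshift⟩ := exists_flipShift_eq_of_isChain l c b hchain hnodup
      (by rwa [List.getLast?_cons_cons] at hb)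
    have hwS : w ∉ S := fun hw => ha (hwa ▸ hS w hw)
    refine ⟨insert w S, by simp [hwu.symm, hu], by simp [hwv.symm, hv], ?_, ?_⟩
    · simp only [mem_insert, forall_eq_or_imp, hwa, List.mem_cons_self, true_and]
      exact fun x hx => List.mem_cons_of_mem a (hS x hx)
    · rw [flipShift, sum_insert hwS, ← flipShift, hshift, hwa, hwc]
      abel

lemma exists_flipShift_eq_of_reflTransGen {α β : Fin (n - 1)}
    (h : Relation.ReflTransGen (colorArc C u v) α β) :
    ∃ S : Finset (Fin n), u ∉ S ∧ v ∉ S ∧ flipShift C u v S = Pi.single α 1 - Pi.single β 1 := by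
  obtain ⟨l, hchain, hnodup, hlast⟩ := h.exists_nodup_isChain
  obtain ⟨S, hu, hv, -, hS⟩ := exists_flipShift_eq_of_isChain l α β hchain hnodup hlast
  exact ⟨S, hu, hv, hS⟩

theorem exists_isFlip_phi_lt_of_aCount_add_two_le (huv : u ≠ v) {lam : Fin (n - 1)}
    (hlam : aCount C v lam + 2 ≤ aCount C u lam) :
    ∃ C' : EdgeColoring n, IsFlip C C' u v ∧ Phi C' < Phi C := by
  obtain ⟨ν, hreach, hν⟩ := exists_colorArc_reachable_aCount_lt (C := C) huv (lam := lam)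
    (by omega)
  have hlamν : lam ≠ ν := by rintro rfl; omega
  obtain ⟨S, hu, hv, hS⟩ := exists_flipShift_eq_of_reflTransGen hreach
  refine ⟨flipOn C u v S, isFlip_flipOn hu hv, ?_⟩
  have hPhi := Phi_flipOn (C := C) huv hu hv
  rw [hS, sum_two_mul_single_sub_single hlamν] at hPhi
  simp only [aCountVec] at hPhi
  omega

end ColorArc

theorem exists_flip_decreasing_phi_general (n : ℕ)
    (C : EdgeColoring n) (u v : Fin n) (huv : u ≠ v)
    (hlam : ∃ lam : Fin (n - 1), 2 ≤ |(aCount C u lam : ℤ) - (aCount C v lam : ℤ)|) :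
    ∃ C' : EdgeColoring n, IsFlip C C' u v ∧ Phi C' < Phi C := by
  obtain ⟨lam, hlam⟩ := hlam
  rcases le_abs'.mp hlam with h | h
  · obtain ⟨C', hflip, hphi⟩ :=
      exists_isFlip_phi_lt_of_aCount_add_two_le (C := C) huv.symm (lam := lam) (by omega)
    exact ⟨C', hflip.symm, hphi⟩
  · exact exists_isFlip_phi_lt_of_aCount_add_two_le (C := C) huv (lam := lam) (by omega)

/-- If `|a_{u,λ} − a_{v,λ}| ≥ 2` for some color `λ`, then there is a `(u,v)`-flip
that strictly decreases `Φ`. -/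
theorem exists_flip_decreasing_phi (n : ℕ) (hn : Even n) (h2 : 2 ≤ n)
    (C : EdgeColoring n) (u v : Fin n) (huv : u ≠ v)
    (hlam : ∃ lam : Fin (n - 1), 2 ≤ |(aCount C u lam : ℤ) - (aCount C v lam : ℤ)|) :
    ∃ C' : EdgeColoring n, IsFlip C C' u v ∧ Phi C' < Phi C :=
  exists_flip_decreasing_phi_general n C u v huv hlam
end

section
/- Every finite oriented multigraph (possibly with loops and parallel edges) can be reoriented, by reversing the direction of some of its edges, so that at every vertex the indegree and the outdegree differ by at most one. -/
open Finset

/-! Give two edges `a → v` and `v → b` through a common vertex the same direction: together they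
change outdegree minus indegree at every vertex exactly as the single edge `a → b` does. Merging
them into that edge lowers the number of edges, so by induction only pairwise disjoint edges
remain, and for those every orientation is balanced. Two edges meeting at `v` can always be
reversed first so that they form a path through `v`. -/

section BalancedReorientation

variable {V E : Type*}

-- The source map after reversing the edges on which `r` is `true`;
-- the target map is then `reorient r t s`.
def reorient (r : E → Bool) (s t : E → V) (e : E) : V := if r e then t e else s e

theorem reorient_reorient (r r₀ : E → Bool) (s t : E → V) :
    reorient r (reorient r₀ s t) (reorient r₀ t s) = reorient (fun e => r e ^^ r₀ e) s t := by
  funext e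
  simp only [reorient]
  by_cases h : r e <;> by_cases h₀ : r₀ e <;> simp [h, h₀]

variable [DecidableEq V]

def netOutflow (a b w : V) : ℤ := (if a = w then 1 else 0) - (if b = w then 1 else 0)

theorem netOutflow_add_netOutflow (a v b w : V) :
    netOutflow a v w + netOutflow v b w = netOutflow a b w := by
  unfold netOutflow; ring

theorem abs_netOutflow_le (a b w : V) :
    |netOutflow a b w| ≤ if a = w ∨ b = w then 1 else 0 := by
  unfold netOutflow
  by_cases ha : a = w <;> by_cases hb : b = w <;> simp [ha, hb]

theorem natCast_card_filter_sub_natCast_card_filter (S : Finset E) (a b : E → V) (w : V) :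
    ((S.filter (fun e => a e = w)).card : ℤ) - ((S.filter (fun e => b e = w)).card : ℤ) =
      ∑ e ∈ S, netOutflow (a e) (b e) w := by
  simp only [Finset.card_filter, Nat.cast_sum, Nat.cast_ite, Nat.cast_one, Nat.cast_zero,
    ← Finset.sum_sub_distrib, netOutflow]

theorem abs_sum_netOutflow_le_one {S : Finset E} {s t : E → V} (w : V)
    (hS : ∀ e ∈ S, ∀ f ∈ S, (s e = w ∨ t e = w) → (s f = w ∨ t f = w) → e = f) :
    |∑ e ∈ S, netOutflow (s e) (t e) w| ≤ 1 :=
  calc |∑ e ∈ S, netOutflow (s e) (t e) w|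
      ≤ ∑ e ∈ S, |netOutflow (s e) (t e) w| := Finset.abs_sum_le_sum_abs _ _
    _ ≤ ∑ e ∈ S, if s e = w ∨ t e = w then 1 else 0 :=
        Finset.sum_le_sum fun e _ => abs_netOutflow_le _ _ _
    _ = ((S.filter (fun e => s e = w ∨ t e = w)).card : ℤ) := by rw [Finset.sum_boole]
    _ ≤ 1 := by
        have : (S.filter (fun e => s e = w ∨ t e = w)).card ≤ 1 := by
          rw [Finset.card_le_one]
          intro e he f hf
          rw [Finset.mem_filter] at he hf
          exact hS e he.1 f hf.1 he.2 hf.2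
        exact_mod_cast this

def HasBalancedReorientation (S : Finset E) (s t : E → V) : Prop :=
  ∃ r : E → Bool, ∀ w, |∑ e ∈ S, netOutflow (reorient r s t e) (reorient r t s e) w| ≤ 1

theorem HasBalancedReorientation.of_reorient {S : Finset E} {s t : E → V} (r₀ : E → Bool)
    (h : HasBalancedReorientation S (reorient r₀ s t) (reorient r₀ t s)) :
    HasBalancedReorientation S s t := by
  obtain ⟨r, hr⟩ := h
  refine ⟨fun e => r e ^^ r₀ e, ?_⟩
  rw [← reorient_reorient, ← reorient_reorient]
  exact hr

variable [DecidableEq E]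

theorem sum_netOutflow_reorient_merge {S : Finset E} {s t : E → V} {r : E → Bool} {e f : E}
    (hef : e ≠ f) (he : e ∈ S) (hf : f ∈ S) (hv : t e = s f) (hr : r f = r e) (w : V) :
    ∑ x ∈ S, netOutflow (reorient r s t x) (reorient r t s x) w =
      ∑ x ∈ S.erase f,
        netOutflow (reorient r s (Function.update t e (t f)) x)
          (reorient r (Function.update t e (t f)) s x) w := by
  have he' : e ∈ S.erase f := Finset.mem_erase.2 ⟨hef, he⟩
  rw [← Finset.add_sum_erase _ _ hf, ← Finset.add_sum_erase _ _ he',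
    ← Finset.add_sum_erase _ _ he', ← add_assoc]
  congr 1
  · have hpath := netOutflow_add_netOutflow (s e) (t e) (t f) w
    have hpath' := netOutflow_add_netOutflow (t f) (t e) (s e) w
    rw [hv] at hpath hpath'
    unfold reorient
    cases hre : r e <;>
      simp only [hr, hre, hv, Function.update_self, Bool.false_eq_true, ↓reduceIte] <;> linarith
  · refine Finset.sum_congr rfl fun x hx => ?_
    rw [reorient, reorient, reorient, reorient, Function.update_of_ne (Finset.ne_of_mem_erase hx)]

theorem HasBalancedReorientation.of_merge {S : Finset E} {s t : E → V} {e f : E}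
    (hef : e ≠ f) (he : e ∈ S) (hf : f ∈ S) (hv : t e = s f)
    (h : HasBalancedReorientation (S.erase f) s (Function.update t e (t f))) :
    HasBalancedReorientation S s t := by
  obtain ⟨r, hr⟩ := h
  refine ⟨Function.update r f (r e), fun w => ?_⟩
  rw [sum_netOutflow_reorient_merge hef he hf hv (by simp [Function.update_of_ne hef]) w]
  convert hr w using 2
  refine Finset.sum_congr rfl fun x hx => ?_
  simp only [reorient, Function.update_of_ne (Finset.ne_of_mem_erase hx)]

theorem exists_reorient_target_eq_source {s t : E → V} {e f : E} {v : V} (hef : e ≠ f)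
    (he : s e = v ∨ t e = v) (hf : s f = v ∨ t f = v) :
    ∃ r₀ : E → Bool, reorient r₀ t s e = reorient r₀ s t f := by
  refine ⟨fun x => if x = e then decide (t e ≠ v) else decide (s f ≠ v), ?_⟩
  unfold reorient
  by_cases hte : t e = v <;> by_cases hsf : s f = v <;> simp_all [Ne.symm hef]

theorem hasBalancedReorientation (S : Finset E) (s t : E → V) :
    HasBalancedReorientation S s t := by
  induction S using Finset.strongInduction generalizing s t with
  | H S ih =>
  by_cases hshare :
      ∃ e ∈ S, ∃ f ∈ S, e ≠ f ∧ ∃ v, (s e = v ∨ t e = v) ∧ (s f = v ∨ t f = v)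
  · obtain ⟨e, he, f, hf, hef, v, hev, hfv⟩ := hshare
    obtain ⟨r₀, hchain⟩ := exists_reorient_target_eq_source hef hev hfv
    exact .of_reorient r₀ (.of_merge hef he hf hchain (ih _ (Finset.erase_ssubset hf) _ _))
  · refine ⟨fun _ => false, fun w => ?_⟩
    simpa only [reorient, Bool.false_eq_true, if_false] using
      abs_sum_netOutflow_le_one w fun e he f hf hew hfw =>
        by_contra fun hef => hshare ⟨e, he, f, hf, hef, w, hew, hfw⟩

end BalancedReorientation

theorem exists_balanced_reorientation_general {V E : Type*} [Fintype E] [DecidableEq V]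
    (s t : E → V) :
    ∃ r : E → Bool, ∀ v : V,
      |((Finset.univ.filter (fun e : E => (if r e then t e else s e) = v)).card : ℤ) -
        ((Finset.univ.filter (fun e : E => (if r e then s e else t e) = v)).card : ℤ)| ≤ 1 := by
  classical
  obtain ⟨r, hr⟩ := hasBalancedReorientation (Finset.univ : Finset E) s t
  refine ⟨r, fun v => ?_⟩
  rw [natCast_card_filter_sub_natCast_card_filter]
  exact hr v

/-- Every finite oriented multigraph (given by source and target maps
`s, t : E → V`, loops and parallel edges allowed) can be reoriented (each edge either kept or
reversed, recorded by `r : E → Bool`) so that at every vertex the indegree and the outdegree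
differ by at most one. -/
theorem exists_balanced_reorientation {V E : Type*} [Fintype V] [Fintype E] [DecidableEq V]
    (s t : E → V) :
    ∃ r : E → Bool, ∀ v : V,
      |((Finset.univ.filter (fun e : E => (if r e then t e else s e) = v)).card : ℤ) -
        ((Finset.univ.filter (fun e : E => (if r e then s e else t e) = v)).card : ℤ)| ≤ 1 :=
  exists_balanced_reorientation_general s t
end

section
/- For every even integer n and every k with 4 ≤ k ≤ n, every one-factorization of K_n has a set S of k vertices with deficit D(S) ≥ k − 3. -/
open Finset

/-!
Two color classes of a one-factorization are perfect matchings, i.e. fixed-point-free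
involutions `f` and `g` of the vertex set. Grow `S` one vertex at a time, adding `f x` (or `g x`)
for some `x ∈ S` whose partner lies outside `S`: this removes `x` from the `f`-boundary and adds
at most one vertex to the `g`-boundary, so at every size at most two vertices of `S` have an `f`-
or `g`-partner outside `S`. A `k`-set `S` with this property spans at least `k - 1` edges of the
two colors, which contribute only two colors to `γ(S)`; hence `γ(S) ≤ C(k,2) - (k - 1) + 2`.
-/

open Function

section Boundary

variable {α : Type*} [DecidableEq α]

def boundary (f : α → α) (S : Finset α) : Finset α := {x ∈ S | f x ∉ S}

lemma boundary_insert_subset (f : α → α) (S : Finset α) (z : α) :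
    boundary f (insert z S) ⊆ insert z (boundary f S) := by
  intro y hy
  simp only [boundary, mem_filter, mem_insert, not_or] at hy ⊢
  tauto

lemma card_boundary_insert_le (f : α → α) (S : Finset α) (z : α) :
    #(boundary f (insert z S)) ≤ #(boundary f S) + 1 :=
  (card_le_card (boundary_insert_subset f S z)).trans (card_insert_le _ _)

lemma card_boundary_insert_apply_lt {f : α → α} (hf : Involutive f) {S : Finset α} {x : α}
    (hx : x ∈ boundary f S) : #(boundary f (insert (f x) S)) < #(boundary f S) := by
  have hsub : boundary f (insert (f x) S) ⊆ (boundary f S).erase x := by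
    intro y hy
    simp only [boundary, mem_filter, mem_insert, mem_erase, not_or] at hx hy ⊢
    obtain ⟨rfl | hyS, hfy, hfyS⟩ := hy
    · rw [hf x] at hfyS
      exact absurd hx.1 hfyS
    · exact ⟨fun hyx => hfy (hyx ▸ rfl), hyS, hfyS⟩
  exact (card_le_card hsub).trans_lt (card_erase_lt_of_mem hx)

theorem exists_card_eq_card_boundary_add_card_boundary_le_two [Fintype α] {f g : α → α}
    (hf : Involutive f) (hg : Involutive g) {k : ℕ} (hk : k ≤ Fintype.card α) :
    ∃ S : Finset α, #S = k ∧ #(boundary f S) + #(boundary g S) ≤ 2 := by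
  induction k with
  | zero => exact ⟨∅, rfl, by simp [boundary]⟩
  | succ k ih =>
    obtain ⟨S, hS, hbd⟩ := ih (by omega)
    suffices ∃ z ∉ S, #(boundary f (insert z S)) + #(boundary g (insert z S)) ≤ 2 by
      obtain ⟨z, hz, hbd'⟩ := this
      exact ⟨insert z S, by rw [card_insert_of_notMem hz, hS], hbd'⟩
    obtain ⟨x, hx⟩ | hf0 := (boundary f S).eq_empty_or_nonempty.symm
    · refine ⟨f x, (mem_filter.1 hx).2, ?_⟩
      have := card_boundary_insert_apply_lt hf hx
      have := card_boundary_insert_le g S (f x)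
      omega
    obtain ⟨x, hx⟩ | hg0 := (boundary g S).eq_empty_or_nonempty.symm
    · refine ⟨g x, (mem_filter.1 hx).2, ?_⟩
      have := card_boundary_insert_apply_lt hg hx
      have := card_boundary_insert_le f S (g x)
      omega
    obtain ⟨z, hz⟩ : ∃ z, z ∉ S := by
      by_contra! h
      rw [eq_univ_of_forall h, card_univ] at hS
      omega
    refine ⟨z, hz, ?_⟩
    have hzf := card_boundary_insert_le f S z
    have hzg := card_boundary_insert_le g S z
    simp only [hf0, hg0, card_empty] at hzf hzg
    omega

end Boundary

lemma card_image_add_card_filter_mem_le {β γ : Type*} [DecidableEq γ] (E : Finset β)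
    (c : β → γ) (T : Finset γ) : #(E.image c) + #{e ∈ E | c e ∈ T} ≤ #E + #T := by
  have hsub : E.image c ⊆ {e ∈ E | c e ∉ T}.image c ∪ T := by
    intro y hy
    obtain ⟨e, he, rfl⟩ := mem_image.1 hy
    by_cases hT : c e ∈ T
    · exact mem_union_right _ hT
    · exact mem_union_left _ (mem_image_of_mem c (mem_filter.2 ⟨he, hT⟩))
  have := (card_le_card hsub).trans (card_union_le _ _)
  have := card_image_le (s := {e ∈ E | c e ∉ T}) (f := c)
  have := card_filter_add_card_filter_not (s := E) (fun e => c e ∈ T)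
  omega

lemma card_image_add_card_filter_eq_add_card_filter_eq_le {β γ : Type*} [DecidableEq γ]
    (E : Finset β) (c : β → γ) {μ ν : γ} (hμν : μ ≠ ν) :
    #(E.image c) + #{e ∈ E | c e = μ} + #{e ∈ E | c e = ν} ≤ #E + 2 := by
  classical
  have h := card_image_add_card_filter_mem_le E c {μ, ν}
  simp only [mem_insert, mem_singleton] at h
  rw [filter_or, card_union_of_disjoint (disjoint_filter.2 fun e _ h => h ▸ hμν)] at h
  have := card_le_two (a := μ) (b := ν)
  omega

namespace IsOneFactorization

variable {n : ℕ} {X : EdgeColoring n}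

lemma injective_color_of_ne (hX : IsOneFactorization X) (u : Fin n) :
    Injective fun v : {v // v ≠ u} => X s(u, v) := by
  rintro ⟨v, hv⟩ ⟨w, hw⟩ hvw
  by_contra hne
  refine hX s(u, v) s(u, w) (by simpa using hv.symm) (by simpa using hw.symm) ?_
    ⟨u, by simp, by simp⟩ hvw
  simpa [Subtype.ext_iff, hv] using hne

lemma existsUnique_partner (hX : IsOneFactorization X) (μ : Fin (n - 1)) (u : Fin n) :
    ∃! v, v ≠ u ∧ X s(u, v) = μ := by
  have hbij := (Fintype.bijective_iff_injective_and_card _).2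
    ⟨hX.injective_color_of_ne u, by simp [Fintype.card_subtype_compl]⟩
  obtain ⟨⟨v, hv⟩, hvμ⟩ := hbij.2 μ
  exact ⟨v, ⟨hv, hvμ⟩, fun w hw =>
    congrArg Subtype.val (hbij.1 (a₁ := ⟨w, hw.1⟩) (hw.2.trans hvμ.symm))⟩

lemma exists_involutive_color (hX : IsOneFactorization X) (μ : Fin (n - 1)) :
    ∃ f : Fin n → Fin n, Involutive f ∧ (∀ x, f x ≠ x) ∧ ∀ x, X s(x, f x) = μ := by
  choose f hf huniq using hX.existsUnique_partner μ
  refine ⟨f, fun x => (huniq (f x) x ⟨(hf x).1.symm, ?_⟩).symm, fun x => (hf x).1,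
    fun x => (hf x).2⟩
  rw [Sym2.eq_swap]
  exact (hf x).2

end IsOneFactorization

lemma edgesIn_eq_image_offDiag {n : ℕ} (S : Finset (Fin n)) :
    edgesIn S = S.offDiag.image Sym2.mk.uncurry := by
  ext e
  induction e using Sym2.ind with
  | _ a b =>
    simp only [edgesIn, mem_filter, mem_univ, true_and, Sym2.mk_isDiag_iff, Sym2.mem_iff,
      mem_image, mem_offDiag, Prod.exists, Function.uncurry_apply_pair]
    constructor
    · rintro ⟨hab, hS⟩
      exact ⟨a, b, ⟨hS a (.inl rfl), hS b (.inr rfl), hab⟩, rfl⟩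
    · rintro ⟨c, d, ⟨hc, hd, hcd⟩, he⟩
      rcases Sym2.eq_iff.1 he with ⟨rfl, rfl⟩ | ⟨rfl, rfl⟩
      · exact ⟨hcd, by rintro x (rfl | rfl) <;> assumption⟩
      · exact ⟨hcd.symm, by rintro x (rfl | rfl) <;> assumption⟩

lemma card_edgesIn {n : ℕ} (S : Finset (Fin n)) : #(edgesIn S) = (#S).choose 2 := by
  rw [edgesIn_eq_image_offDiag, Sym2.card_image_offDiag]

lemma card_le_card_boundary_add_two_mul_card_filter_color {n : ℕ} {γ : Type*} [DecidableEq γ]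
    (X : Sym2 (Fin n) → γ) {μ : γ} {f : Fin n → Fin n} (hf : ∀ x, f x ≠ x)
    (hcol : ∀ x, X s(x, f x) = μ) (S : Finset (Fin n)) :
    #S ≤ #(boundary f S) + 2 * #{e ∈ edgesIn S | X e = μ} := by
  have hmaps : ∀ x ∈ S.filter (f · ∈ S), s(x, f x) ∈ {e ∈ edgesIn S | X e = μ} := by
    intro x hx
    obtain ⟨hxS, hfxS⟩ := mem_filter.1 hx
    simp only [edgesIn, mem_filter, mem_univ, true_and, Sym2.mk_isDiag_iff, Sym2.mem_iff]
    exact ⟨⟨(hf x).symm, by rintro y (rfl | rfl) <;> assumption⟩, hcol x⟩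
  have hfiber : ∀ e ∈ {e ∈ edgesIn S | X e = μ},
      #{x ∈ S.filter (f · ∈ S) | s(x, f x) = e} ≤ 2 := by
    intro e _
    induction e using Sym2.ind with
    | _ a b =>
      refine (card_le_card fun x hx => ?_).trans (card_le_two (a := a) (b := b))
      have hxe := Sym2.eq_iff.1 (mem_filter.1 hx).2
      simp only [mem_insert, mem_singleton]
      tauto
  have := card_le_mul_card_image_of_maps_to hmaps 2 hfiber
  have := card_filter_add_card_filter_not (s := S) (f · ∈ S)
  rw [boundary]
  omega

theorem exists_set_deficit_k_sub_three_general (n : ℕ) (k : ℕ) (hk4 : 4 ≤ k)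
    (hkn : k ≤ n) (X : EdgeColoring n) (hX : IsOneFactorization X) :
    ∃ S : Finset (Fin n), S.card = k ∧ (k : ℤ) - 3 ≤ deficit X S := by
  obtain ⟨μ, ν, hμν⟩ : ∃ μ ν : Fin (n - 1), μ ≠ ν :=
    ⟨⟨0, by omega⟩, ⟨1, by omega⟩, by simp⟩
  obtain ⟨f, hf, hf0, hfμ⟩ := hX.exists_involutive_color μ
  obtain ⟨g, hg, hg0, hgν⟩ := hX.exists_involutive_color ν
  obtain ⟨S, rfl, hbd⟩ :=
    exists_card_eq_card_boundary_add_card_boundary_le_two hf hg (k := k) (by simpa using hkn)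
  refine ⟨S, rfl, ?_⟩
  have hμ := card_le_card_boundary_add_two_mul_card_filter_color X hf0 hfμ S
  have hν := card_le_card_boundary_add_two_mul_card_filter_color X hg0 hgν S
  have hγ := card_image_add_card_filter_eq_add_card_filter_eq_le (edgesIn S) X hμν
  rw [deficit, gammaColors, ← card_edgesIn]
  omega

/-- For every even `n` and every `4 ≤ k ≤ n`, every one-factorization of `K_n`
has a set of `k` vertices with deficit at least `k − 3`. -/
theorem exists_set_deficit_k_sub_three (n : ℕ) (hn : Even n) (k : ℕ) (hk4 : 4 ≤ k)
    (hkn : k ≤ n) (X : EdgeColoring n) (hX : IsOneFactorization X) :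
    ∃ S : Finset (Fin n), S.card = k ∧ (k : ℤ) - 3 ≤ deficit X S :=
  exists_set_deficit_k_sub_three_general n k hk4 hkn X hX
end

section
/- For every integer d ≥ −2 there exist a constant C > 0 and an integer n₀ such that for every even integer n ≥ n₀, every one-factorization of K_n has a set S of k ≤ C·log n vertices (for some k) with deficit D(S) ≥ k + d. -/
/-!
Fix three colours; their edges form a `3`-regular graph `G`. A set `S` spans at most
`3 + (C(|S|, 2) - e_G(S))` colours, so `D(S) ≥ e_G(S) - 3`, and it suffices to find `S` with
`|S| = O(t log n)` and excess `e_G(S) - |S| ≥ t`.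

Starting from `∅`, the excess can be raised by one at the cost of `O(log n)` new vertices. If an
edge of `G` leaves `S`, a breadth-first search from `S` meets an edge outside its tree within depth
`log₂ n + 2`, since otherwise its layers would double; the two tree paths to that edge add `p`
vertices and at least `p + 1` edges. If `S` is a union of components, add any other vertex and
do this once or twice: the excess drops by one and is regained, and if the result is again a
union of components, the new part has excess at least half its size, by the handshake lemma.
-/

open Finset

namespace SimpleGraph

variable {V : Type*} (G : SimpleGraph V)

def NeighborClosed (S : Finset V) : Prop := ∀ ⦃a b⦄, a ∈ S → G.Adj a b → b ∈ S

variable {G} in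
lemma NeighborClosed.sdiff [DecidableEq V] {S T : Finset V} (hS : G.NeighborClosed S)
    (hT : G.NeighborClosed T) : G.NeighborClosed (T \ S) := by
  intro a b ha hab
  simp only [mem_sdiff] at ha ⊢
  exact ⟨hT ha.1 hab, fun hb => ha.2 (hS hb hab.symm)⟩

variable [DecidableRel G.Adj]

def edgesWithin (S : Finset V) : Finset (Sym2 V) := S.sym2.filter (· ∈ G.edgeSet)

def excess (S : Finset V) : ℤ := #(G.edgesWithin S) - #S

variable {G} {S T : Finset V}

@[simp]
lemma mk_mem_edgesWithin {a b : V} :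
    s(a, b) ∈ G.edgesWithin S ↔ a ∈ S ∧ b ∈ S ∧ G.Adj a b := by
  simp [edgesWithin, and_assoc]

lemma edgesWithin_mono (h : S ⊆ T) : G.edgesWithin S ⊆ G.edgesWithin T :=
  filter_subset_filter _ (sym2_mono h)

@[simp]
lemma excess_empty : G.excess ∅ = 0 := by simp [excess, edgesWithin]

variable [DecidableEq V]

lemma excess_sub_one_le_excess_insert (v : V) : G.excess S - 1 ≤ G.excess (insert v S) := by
  have h₁ := card_le_card (edgesWithin_mono (G := G) (subset_insert v S))
  have h₂ := card_insert_le v S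
  simp only [excess]
  omega

lemma excess_add_excess_le (h : Disjoint S T) : G.excess S + G.excess T ≤ G.excess (S ∪ T) := by
  have hdisj : Disjoint (G.edgesWithin S) (G.edgesWithin T) := by
    refine Finset.disjoint_left.2 fun e hS hT => ?_
    induction e using Sym2.ind with
    | _ a b =>
      exact Finset.disjoint_left.1 h (mk_mem_edgesWithin.1 hS).1 (mk_mem_edgesWithin.1 hT).1
  have hsub := card_le_card <| union_subset
    (edgesWithin_mono (G := G) (subset_union_left (s₂ := T)))
    (edgesWithin_mono (subset_union_right (s₁ := S)))
  rw [card_union_of_disjoint hdisj] at hsub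
  simp only [excess, card_union_of_disjoint h]
  omega

variable [Fintype V]

lemma card_le_two_mul_excess (hdeg : ∀ v, 3 ≤ G.degree v) (hS : G.NeighborClosed S) :
    (#S : ℤ) ≤ 2 * G.excess S := by
  have key : #S * 3 ≤ #(G.edgesWithin S) * 2 := by
    refine card_mul_le_card_mul (fun v e => v ∈ e) (fun v hv => ?_) (fun e he => ?_)
    · refine (hdeg v).trans ?_
      rw [← card_neighborFinset_eq_degree]
      refine card_le_card_of_injOn (fun u => s(v, u)) (fun u hu => ?_)
        (fun u _ w _ h => Sym2.congr_right.1 h)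
      rw [mem_coe, mem_neighborFinset] at hu
      simp [bipartiteAbove, hv, hS hv hu, hu]
    · induction e using Sym2.ind with
      | _ a b =>
        refine (card_le_card fun x hx => ?_).trans (card_le_two (a := a) (b := b))
        simp only [bipartiteBelow, mem_filter, Sym2.mem_iff] at hx
        simpa using hx.2
  simp only [excess]
  omega

lemma NeighborClosed.excess_lt_of_ssubset (hdeg : ∀ v, 3 ≤ G.degree v) (hS : G.NeighborClosed S)
    (hT : G.NeighborClosed T) (hST : S ⊂ T) : G.excess S < G.excess T := by
  have hpos : (0 : ℤ) < #(T \ S) := by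
    exact_mod_cast card_pos.2 (sdiff_nonempty.2 (not_subset_of_ssubset hST))
  have h₁ := card_le_two_mul_excess hdeg (hS.sdiff hT)
  have h₂ := excess_add_excess_le (G := G) (disjoint_sdiff (s := S) (t := T))
  rw [union_sdiff_of_subset hST.subset] at h₂
  omega

lemma NeighborClosed.not_neighborClosed_insert (hS : G.NeighborClosed S) {v : V} (hv : v ∉ S)
    (hdeg : 0 < G.degree v) : ¬ G.NeighborClosed (insert v S) := by
  obtain ⟨u, hvu⟩ := G.degree_pos_iff_exists_adj v |>.1 hdeg
  intro h
  rcases mem_insert.1 (h (mem_insert_self v S) hvu) with rfl | hu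
  · exact G.irrefl hvu
  · exact hv (hS hu hvu.symm)

section Bfs

variable (G S)

def bfsBall : ℕ → Finset V
  | 0 => S
  | r + 1 => bfsBall r ∪ (bfsBall r).biUnion (G.neighborFinset ·)

open Classical in
/-- The distance from `S`; `0` (junk) for the vertices not reachable from `S`. -/
noncomputable def bfsDepth (v : V) : ℕ :=
  if h : ∃ r, v ∈ G.bfsBall S r then Nat.find h else 0

open Classical in
noncomputable def bfsParent (v : V) : V :=
  if h : v ∉ S ∧ ∃ u ∈ G.bfsBall S (G.bfsDepth S v - 1), G.Adj u v then h.2.choose else v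

noncomputable def bfsLayer (r : ℕ) : Finset V := (G.bfsBall S r).filter (G.bfsDepth S · = r)

variable {G S} {r : ℕ} {u v : V}

lemma mem_bfsBall_succ :
    v ∈ G.bfsBall S (r + 1) ↔ v ∈ G.bfsBall S r ∨ ∃ u ∈ G.bfsBall S r, G.Adj u v := by
  simp [bfsBall]

lemma bfsBall_mono : Monotone (G.bfsBall S) :=
  monotone_nat_of_le_succ fun _ => subset_union_left

lemma mem_bfsBall_succ_of_adj (hu : u ∈ G.bfsBall S r) (huv : G.Adj u v) :
    v ∈ G.bfsBall S (r + 1) :=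
  mem_bfsBall_succ.2 (Or.inr ⟨u, hu, huv⟩)

lemma bfsDepth_le (hv : v ∈ G.bfsBall S r) : G.bfsDepth S v ≤ r := by
  rw [bfsDepth, dif_pos ⟨r, hv⟩]
  exact Nat.find_min' _ hv

lemma mem_bfsBall_bfsDepth (hv : v ∈ G.bfsBall S r) : v ∈ G.bfsBall S (G.bfsDepth S v) := by
  rw [bfsDepth, dif_pos ⟨r, hv⟩]
  exact Nat.find_spec (⟨r, hv⟩ : ∃ r, v ∈ G.bfsBall S r)

lemma bfsDepth_eq_zero_iff (hv : v ∈ G.bfsBall S r) : G.bfsDepth S v = 0 ↔ v ∈ S := by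
  rw [bfsDepth, dif_pos (⟨r, hv⟩ : ∃ r, v ∈ G.bfsBall S r), Nat.find_eq_zero]
  rfl

lemma bfsParent_of_mem (hv : v ∈ S) : G.bfsParent S v = v := by
  rw [bfsParent, dif_neg (not_and.2 fun h => absurd hv h)]

lemma bfsParent_spec (hv : v ∈ G.bfsBall S r) (hvS : v ∉ S) :
    G.Adj (G.bfsParent S v) v ∧ G.bfsParent S v ∈ G.bfsBall S (G.bfsDepth S v - 1) ∧
      G.bfsDepth S (G.bfsParent S v) < G.bfsDepth S v := by
  have hpos : 0 < G.bfsDepth S v := Nat.pos_of_ne_zero ((bfsDepth_eq_zero_iff hv).not.2 hvS)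
  have hmem := mem_bfsBall_bfsDepth hv
  rw [← Nat.sub_add_cancel hpos, mem_bfsBall_succ] at hmem
  have hex : ∃ u ∈ G.bfsBall S (G.bfsDepth S v - 1), G.Adj u v :=
    hmem.resolve_left fun h => by have := bfsDepth_le h; omega
  have hpar : G.bfsParent S v = hex.choose := by
    classical
    rw [bfsParent, dif_pos ⟨hvS, hex⟩]
  obtain ⟨hball, hadj⟩ := hex.choose_spec
  rw [hpar]
  exact ⟨hadj, hball, by have := bfsDepth_le hball; omega⟩

variable (G S) in
def BfsParentClosed (A : Finset V) : Prop :=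
  ∀ w ∈ A, w ∉ S ∧ (∃ r, w ∈ G.bfsBall S r) ∧ G.bfsParent S w ∈ S ∪ A

lemma BfsParentClosed.union {A B : Finset V} (hA : G.BfsParentClosed S A)
    (hB : G.BfsParentClosed S B) : G.BfsParentClosed S (A ∪ B) := by
  intro w hw
  rcases mem_union.1 hw with hw | hw
  · obtain ⟨hwS, hreach, hpar⟩ := hA w hw
    exact ⟨hwS, hreach, by grind⟩
  · obtain ⟨hwS, hreach, hpar⟩ := hB w hw
    exact ⟨hwS, hreach, by grind⟩

lemma exists_bfsParentClosed (hv : v ∈ G.bfsBall S r) :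
    ∃ A, G.BfsParentClosed S A ∧ v ∈ S ∪ A ∧ #A ≤ G.bfsDepth S v := by
  induction hd : G.bfsDepth S v using Nat.strong_induction_on generalizing v r with
  | _ k ih =>
    by_cases hvS : v ∈ S
    · exact ⟨∅, by simp [BfsParentClosed], by simp [hvS], by simp⟩
    obtain ⟨hadj, hball, hlt⟩ := bfsParent_spec hv hvS
    obtain ⟨A, hA, hpA, hcard⟩ := ih _ (hd ▸ hlt) hball rfl
    refine ⟨insert v A, fun w hw => ?_, by simp, ?_⟩
    · rcases mem_insert.1 hw with rfl | hw
      · exact ⟨hvS, ⟨r, hv⟩, by grind⟩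
      · obtain ⟨hwS, hreach, hpar⟩ := hA w hw
        exact ⟨hwS, hreach, by grind⟩
    · have := card_insert_le v A
      omega

lemma BfsParentClosed.bfsParent_spec {A : Finset V} (hA : G.BfsParentClosed S A) {w : V}
    (hw : w ∈ A) :
    G.Adj (G.bfsParent S w) w ∧ G.bfsDepth S (G.bfsParent S w) < G.bfsDepth S w := by
  obtain ⟨hwS, ⟨r, hr⟩, -⟩ := hA w hw
  obtain ⟨hadj, -, hlt⟩ := SimpleGraph.bfsParent_spec hr hwS
  exact ⟨hadj, hlt⟩

lemma BfsParentClosed.injOn {A : Finset V} (hA : G.BfsParentClosed S A) :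
    Set.InjOn (fun w => s(w, G.bfsParent S w)) A := by
  intro w₁ hw₁ w₂ hw₂ h
  rcases Sym2.eq_iff.1 h with ⟨h, -⟩ | ⟨h₁, h₂⟩
  · exact h
  · have hlt₁ := (hA.bfsParent_spec hw₁).2
    have hlt₂ := (hA.bfsParent_spec hw₂).2
    rw [h₂] at hlt₁
    rw [← h₁] at hlt₂
    omega

/-- The parent edges of the vertices of `A` are distinct, and `s(x, z)` is one more edge. -/
lemma BfsParentClosed.excess_lt_excess_union {A : Finset V} (hA : G.BfsParentClosed S A)
    {x z : V} (hx : x ∈ A) (hz : z ∈ S ∪ A) (hxz : G.Adj x z) (hpx : G.bfsParent S x ≠ z)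
    (hpz : G.bfsParent S z ≠ x) : G.excess S < G.excess (S ∪ A) := by
  set f : V → Sym2 V := fun w => s(w, G.bfsParent S w)
  have hdisj : Disjoint (G.edgesWithin S) (A.image f) := by
    refine Finset.disjoint_left.2 fun e heS heA => ?_
    obtain ⟨w, hw, rfl⟩ := mem_image.1 heA
    exact (hA w hw).1 (mk_mem_edgesWithin.1 heS).1
  have hnew : s(x, z) ∉ G.edgesWithin S ∪ A.image f := by
    simp only [mem_union, mk_mem_edgesWithin, mem_image, not_or, not_exists, not_and, f]
    refine ⟨fun hxS => absurd hxS (hA x hx).1, fun w _ h => ?_⟩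
    rcases Sym2.eq_iff.1 h with ⟨rfl, rfl⟩ | ⟨rfl, rfl⟩
    · exact hpx rfl
    · exact hpz rfl
  have hsub : insert s(x, z) (G.edgesWithin S ∪ A.image f) ⊆ G.edgesWithin (S ∪ A) := by
    refine insert_subset (mk_mem_edgesWithin.2 ⟨mem_union_right _ hx, hz, hxz⟩)
      (union_subset (edgesWithin_mono subset_union_left) fun e he => ?_)
    obtain ⟨w, hw, rfl⟩ := mem_image.1 he
    obtain ⟨-, -, hpar⟩ := hA w hw
    exact mk_mem_edgesWithin.2 ⟨mem_union_right _ hw, hpar, (hA.bfsParent_spec hw).1.symm⟩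
  have hcard := card_le_card hsub
  rw [card_insert_of_notMem hnew, card_union_of_disjoint hdisj, card_image_of_injOn hA.injOn]
    at hcard
  have hSA : Disjoint S A := Finset.disjoint_right.2 fun w hw => (hA w hw).1
  simp only [excess, card_union_of_disjoint hSA]
  omega

lemma exists_excess_lt_of_adj {x z : V} (hx : x ∈ G.bfsBall S r) (hxS : x ∉ S)
    (hz : z ∈ G.bfsBall S r) (hxz : G.Adj x z) (hpx : G.bfsParent S x ≠ z)
    (hpz : G.bfsParent S z ≠ x) :
    ∃ T, S ⊆ T ∧ #T ≤ #S + 2 * r ∧ G.excess S < G.excess T := by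
  obtain ⟨A, hA, hxA, hcardA⟩ := exists_bfsParentClosed hx
  obtain ⟨B, hB, hzB, hcardB⟩ := exists_bfsParentClosed hz
  have hx' : x ∈ A ∪ B := mem_union_left _ ((mem_union.1 hxA).resolve_left hxS)
  have hz' : z ∈ S ∪ (A ∪ B) := by grind
  refine ⟨S ∪ (A ∪ B), subset_union_left, ?_,
    (hA.union hB).excess_lt_excess_union hx' hz' hxz hpx hpz⟩
  have := card_union_le S (A ∪ B)
  have := card_union_le A B
  have := bfsDepth_le hx
  have := bfsDepth_le hz
  omega

lemma two_mul_card_bfsLayer_le (hdeg : ∀ v, 3 ≤ G.degree v) {R : ℕ}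
    (htree : ∀ x ∈ G.bfsBall S R, x ∉ S → ∀ z ∈ G.bfsBall S R, G.Adj x z →
      G.bfsParent S x ≠ z → G.bfsParent S z = x)
    (hr : 1 ≤ r) (hrR : r < R) : 2 * #(G.bfsLayer S r) ≤ #(G.bfsLayer S (r + 1)) := by
  have key := card_mul_le_card_mul (s := G.bfsLayer S r) (t := G.bfsLayer S (r + 1)) (m := 2)
    (n := 1) (fun x z => G.bfsParent S z = x) (fun x hx => ?_) (fun z _ => ?_)
  · omega
  · obtain ⟨hxr, hdx⟩ := mem_filter.1 hx
    have hxS : x ∉ S := fun h => by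
      have := (bfsDepth_eq_zero_iff hxr).2 h
      omega
    refine le_trans ?_ (card_le_card (s := (G.neighborFinset x).erase (G.bfsParent S x))
      fun z hz => ?_)
    · have := pred_card_le_card_erase (s := G.neighborFinset x) (a := G.bfsParent S x)
      rw [card_neighborFinset_eq_degree] at this
      have := hdeg x
      omega
    obtain ⟨hzx, hadj⟩ := mem_erase.1 hz
    rw [mem_neighborFinset] at hadj
    have hzr : z ∈ G.bfsBall S (r + 1) := mem_bfsBall_succ_of_adj hxr hadj
    have hpz : G.bfsParent S z = x :=
      htree x (bfsBall_mono hrR.le hxr) hxS z (bfsBall_mono hrR hzr) hadj (Ne.symm hzx)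
    have hzS : z ∉ S := fun h => hxS (by rwa [← hpz, bfsParent_of_mem h])
    have hlt := (bfsParent_spec hzr hzS).2.2
    have hle := bfsDepth_le hzr
    rw [hpz, hdx] at hlt
    simp only [bipartiteAbove, bfsLayer, mem_filter]
    exact ⟨⟨hzr, by omega⟩, hpz⟩
  · exact card_le_one.2 fun a ha b hb => by
      simp only [bipartiteBelow, mem_filter] at ha hb
      rw [← ha.2, ← hb.2]

/-- If every edge met by the breadth-first search from `S` up to depth `D + 1` were a tree edge,
its layers would double, and the last one would have `2 ^ D` vertices. -/
theorem exists_excess_lt_of_not_neighborClosed (hdeg : ∀ v, 3 ≤ G.degree v) {D : ℕ}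
    (hV : Fintype.card V < 2 ^ D) (hS : ¬ G.NeighborClosed S) :
    ∃ T, S ⊆ T ∧ #T ≤ #S + 2 * (D + 1) ∧ G.excess S < G.excess T := by
  by_contra hno
  have htree : ∀ x ∈ G.bfsBall S (D + 1), x ∉ S → ∀ z ∈ G.bfsBall S (D + 1),
      G.Adj x z → G.bfsParent S x ≠ z → G.bfsParent S z = x := by
    intro x hx hxS z hz hxz hpx
    by_contra hpz
    exact hno (exists_excess_lt_of_adj hx hxS hz hxz hpx hpz)
  have hlayer : ∀ r ≤ D, 2 ^ r ≤ #(G.bfsLayer S (r + 1)) := by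
    intro r hr
    induction r with
    | zero =>
      simp only [NeighborClosed, not_forall] at hS
      obtain ⟨a, b, ha, hab, hb⟩ := hS
      have hb₁ : b ∈ G.bfsBall S 1 := mem_bfsBall_succ_of_adj (r := 0) ha hab
      have := bfsDepth_le hb₁
      have := (bfsDepth_eq_zero_iff hb₁).not.2 hb
      exact card_pos.2 ⟨b, mem_filter.2 ⟨hb₁, by omega⟩⟩
    | succ r ih =>
      have := two_mul_card_bfsLayer_le hdeg htree (r := r + 1) (by omega) (by omega)
      rw [pow_succ]
      linarith [ih (by omega)]
  have := card_le_univ (G.bfsLayer S (D + 1))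
  have := hlayer D le_rfl
  omega

end Bfs

theorem exists_excess_lt (hdeg : ∀ v, 3 ≤ G.degree v) {D : ℕ} (hV : Fintype.card V < 2 ^ D)
    (hS : S ≠ univ) : ∃ T, #T ≤ #S + (4 * D + 5) ∧ G.excess S < G.excess T := by
  by_cases hcl : G.NeighborClosed S
  · obtain ⟨v, -, hv⟩ := exists_of_ssubset (ssubset_univ_iff.2 hS)
    obtain ⟨T₁, hT₁, hcard₁, hlt₁⟩ := exists_excess_lt_of_not_neighborClosed hdeg hV
      (hcl.not_neighborClosed_insert hv (by linarith [hdeg v]))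
    have := excess_sub_one_le_excess_insert (G := G) (S := S) v
    by_cases hcl₁ : G.NeighborClosed T₁
    · refine ⟨T₁, by grind [card_insert_le], hcl.excess_lt_of_ssubset hdeg hcl₁ ?_⟩
      exact (ssubset_insert hv).trans_subset hT₁
    · obtain ⟨T₂, -, hcard₂, hlt₂⟩ :=
        exists_excess_lt_of_not_neighborClosed hdeg hV hcl₁
      exact ⟨T₂, by grind [card_insert_le], by omega⟩
  · obtain ⟨T, -, hcard, hlt⟩ := exists_excess_lt_of_not_neighborClosed hdeg hV hcl
    exact ⟨T, by omega, hlt⟩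

theorem exists_card_le_le_excess (hdeg : ∀ v, 3 ≤ G.degree v) {D : ℕ}
    (hV : Fintype.card V < 2 ^ D) {t : ℕ} (ht : 2 * t ≤ Fintype.card V) :
    ∃ S : Finset V, #S ≤ t * (4 * D + 5) ∧ t ≤ G.excess S := by
  suffices ∀ j ≤ t, ∃ S : Finset V, #S ≤ j * (4 * D + 5) ∧ j ≤ G.excess S from
    this t le_rfl
  intro j hj
  induction j with
  | zero => exact ⟨∅, by simp, by simp⟩
  | succ j ih =>
    obtain ⟨S, hcard, hex⟩ := ih (by omega)
    have hstep : j * (4 * D + 5) + (4 * D + 5) = (j + 1) * (4 * D + 5) := by ring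
    by_cases hS : S = univ
    · subst hS
      have := card_le_two_mul_excess hdeg (G := G) (fun _ _ _ _ => mem_univ _)
      rw [card_univ] at this
      exact ⟨univ, by omega, by omega⟩
    · obtain ⟨T, hcard', hlt⟩ := exists_excess_lt hdeg hV hS
      exact ⟨T, by omega, by omega⟩

end SimpleGraph

section OneFactorization

variable {n : ℕ}

namespace IsOneFactorization

variable {X : EdgeColoring n}

theorem exists_color_eq (hX : IsOneFactorization X) (v : Fin n) (c : Fin (n - 1)) :
    ∃ u, u ≠ v ∧ X s(v, u) = c := by
  have hinj : ∀ a b, a ∈ univ.erase v → b ∈ univ.erase v →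
      X s(v, a) = X s(v, b) → a = b := by
    intro a b ha hb h
    by_contra hab
    refine hX s(v, a) s(v, b) ?_ ?_ ?_ ⟨v, by simp, by simp⟩ h
    · simpa using (ne_of_mem_erase ha).symm
    · simpa using (ne_of_mem_erase hb).symm
    · simp [hab, ne_of_mem_erase ha]
  obtain ⟨u, hu, h⟩ := surj_on_of_inj_on_of_card_le (fun u _ => X s(v, u))
    (fun _ _ => mem_univ _) hinj (by simp) c (mem_univ c)
  exact ⟨u, ne_of_mem_erase hu, h.symm⟩

end IsOneFactorization

lemma card_edgesIn_le_choose (S : Finset (Fin n)) : #(edgesIn S) ≤ (#S).choose 2 := by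
  rw [← Sym2.card_image_offDiag]
  refine card_le_card fun e he => ?_
  induction e using Sym2.ind with
  | _ a b =>
    simp only [edgesIn, mem_filter, Sym2.mk_isDiag_iff, Sym2.mem_iff] at he
    exact mem_image.2
      ⟨(a, b), by simp [he.2.2 a (.inl rfl), he.2.2 b (.inr rfl), he.2.1], rfl⟩

section ColorGraph

-- `EdgeColoring n` is not reducible, so instance search cannot decide `X e ∈ M`.
open scoped Classical

abbrev colorGraph (X : EdgeColoring n) (M : Finset (Fin (n - 1))) : SimpleGraph (Fin n) :=
  SimpleGraph.fromEdgeSet {e | X e ∈ M}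

lemma IsOneFactorization.card_le_degree_colorGraph {X : EdgeColoring n}
    (hX : IsOneFactorization X) (M : Finset (Fin (n - 1))) (v : Fin n) :
    #M ≤ (colorGraph X M).degree v := by
  rw [← SimpleGraph.card_neighborFinset_eq_degree]
  refine card_le_card_of_surjOn (fun u => X s(v, u)) fun c hc => ?_
  obtain ⟨u, huv, rfl⟩ := hX.exists_color_eq v c
  exact ⟨u, by simpa [huv.symm] using hc, rfl⟩

lemma edgesWithin_colorGraph (X : EdgeColoring n) (M : Finset (Fin (n - 1)))
    (S : Finset (Fin n)) : (colorGraph X M).edgesWithin S = (edgesIn S).filter (X · ∈ M) := by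
  ext e
  induction e using Sym2.ind with
  | _ a b => simp [edgesIn, and_comm, and_assoc, and_left_comm]

lemma card_filter_sub_card_le_deficit (X : EdgeColoring n) (M : Finset (Fin (n - 1)))
    (S : Finset (Fin n)) : (#((edgesIn S).filter (X · ∈ M)) : ℤ) - #M ≤ deficit X S := by
  have hsub : (edgesIn S).image X ⊆ M ∪ ((edgesIn S).filter (X · ∉ M)).image X := by
    intro c hc
    obtain ⟨e, he, rfl⟩ := mem_image.1 hc
    by_cases hM : X e ∈ M
    · exact mem_union_left _ hM
    · exact mem_union_right _ (mem_image_of_mem X (mem_filter.2 ⟨he, hM⟩))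
  have hγ : gammaColors X S ≤ #M + #((edgesIn S).filter (X · ∉ M)) :=
    (card_le_card hsub).trans <| (card_union_le _ _).trans <| Nat.add_le_add_left card_image_le _
  have := card_filter_add_card_filter_not (s := edgesIn S) (X · ∈ M)
  have := card_edgesIn_le_choose S
  simp only [deficit]
  omega

end ColorGraph

end OneFactorization

lemma natLog_two_le_two_mul_log (n : ℕ) : (Nat.log 2 n : ℝ) ≤ 2 * Real.log n := by
  have h := Real.natLog_le_logb n 2
  rw [← Real.log_div_log, Nat.cast_ofNat] at h
  have := Real.log_two_gt_d9
  have := Real.log_natCast_nonneg n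
  rw [le_div_iff₀ (by linarith)] at h
  nlinarith

lemma mul_natLog_add_le_mul_log {n : ℕ} (hn : 8 ≤ n) (t : ℕ) :
    ((t * (4 * (Nat.log 2 n + 1) + 5) : ℕ) : ℝ) ≤ 14 * t * Real.log n := by
  have hL : 3 ≤ Nat.log 2 n := Nat.le_log_of_pow_le one_lt_two (by omega)
  have h : t * (4 * (Nat.log 2 n + 1) + 5) ≤ 7 * t * Nat.log 2 n := by nlinarith
  calc ((t * (4 * (Nat.log 2 n + 1) + 5) : ℕ) : ℝ)
      ≤ 7 * t * (Nat.log 2 n : ℝ) := by exact_mod_cast h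
    _ ≤ 7 * t * (2 * Real.log n) := by gcongr; exact natLog_two_le_two_mul_log n
    _ = 14 * t * Real.log n := by ring

theorem exists_log_size_set_large_deficit_general (d : ℤ) :
    ∃ (Cc : ℝ) (n₀ : ℕ), 0 < Cc ∧
      ∀ n : ℕ, n₀ ≤ n → Even n →
        ∀ X : EdgeColoring n, IsOneFactorization X →
          ∃ S : Finset (Fin n), (S.card : ℝ) ≤ Cc * Real.log n ∧
            (S.card : ℤ) + d ≤ deficit X S := by
  classical
  set t := (d + 3).toNat
  refine ⟨14 * t + 1, 2 * t + 8, by positivity, fun n hn _ X hX => ?_⟩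
  obtain ⟨M, -, hM⟩ := exists_subset_card_eq (s := (univ : Finset (Fin (n - 1)))) (n := 3)
    (by simp; omega)
  have hdeg : ∀ v, 3 ≤ (colorGraph X M).degree v := hM ▸ hX.card_le_degree_colorGraph M
  obtain ⟨S, hcard, hex⟩ := (colorGraph X M).exists_card_le_le_excess hdeg (t := t)
    (by simpa using Nat.lt_pow_succ_log_self one_lt_two n) (by simp; omega)
  have hdef := card_filter_sub_card_le_deficit X M S
  rw [← edgesWithin_colorGraph, hM] at hdef
  refine ⟨S, ?_, ?_⟩
  · have := mul_natLog_add_le_mul_log (by omega : 8 ≤ n) t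
    have := Real.log_natCast_nonneg n
    have : (#S : ℝ) ≤ ((t * (4 * (Nat.log 2 n + 1) + 5) : ℕ) : ℝ) := by exact_mod_cast hcard
    nlinarith
  · have := Int.self_le_toNat (d + 3)
    simp only [SimpleGraph.excess] at hex
    omega

/-- For every integer `d ≥ −2` there are a constant `C > 0` and `n₀` such that
for every even `n ≥ n₀`, every one-factorization of `K_n` has a set `S` of `k ≤ C·log n` vertices
with deficit at least `k + d`. -/
theorem exists_log_size_set_large_deficit (d : ℤ) (hd : -2 ≤ d) :
    ∃ (Cc : ℝ) (n₀ : ℕ), 0 < Cc ∧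
      ∀ n : ℕ, n₀ ≤ n → Even n →
        ∀ X : EdgeColoring n, IsOneFactorization X →
          ∃ S : Finset (Fin n), (S.card : ℝ) ≤ Cc * Real.log n ∧
            (S.card : ℤ) + d ≤ deficit X S :=
  exists_log_size_set_large_deficit_general d
end
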